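/- For every even m ≥ 6, the spectral radius of S_{(m+4)/2,2}^- satisfies ρ(S_{(m+4)/2,2}^-) > (1+√(4m-5))/2. -/
import Mathlib


open Matrix SimpleGraph
open scoped Classical

/-- The spectral radius of a finite simple graph: the largest (real) eigenvalue
of its adjacency matrix. -/
noncomputable def specRad {V : Type*} [Fintype V] (G : SimpleGraph V) : ℝ :=
  sSup {t : ℝ | ∃ x : V → ℝ, x ≠ 0 ∧ G.adjMatrix ℝ *ᵥ x = t • x}

/-- `x` is a Perron vector of `G`: positive entries and an eigenvector for the
spectral radius. -/
def IsPerronVector {V : Type*} [Fintype V] (G : SimpleGraph V) (x : V → ℝ) : Prop :=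
  (∀ v, 0 < x v) ∧ G.adjMatrix ℝ *ᵥ x = specRad G • x

/-- `G` contains a copy of `F` as a (not necessarily induced) subgraph. -/
def ContainsSub {α β : Type*} (F : SimpleGraph α) (G : SimpleGraph β) : Prop :=
  ∃ f : α ↪ β, ∀ ⦃a b⦄, F.Adj a b → G.Adj (f a) (f b)

/-- Number of edges of `G` with both endpoints in `S`. -/
noncomputable def eIn {V : Type*} (G : SimpleGraph V) (S : Set V) : ℕ :=
  {e ∈ G.edgeSet | ∀ v ∈ e, v ∈ S}.ncard

/-- The cycle graph `C_n` on `Fin n`. -/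
def cycG (n : ℕ) : SimpleGraph (Fin n) :=
  SimpleGraph.fromRel (fun a b => b.val = (a.val + 1) % n)

/-- The star `K_{1,r}` on `r+1` vertices, center `0`. -/
def starG (r : ℕ) : SimpleGraph (Fin (r + 1)) :=
  SimpleGraph.fromRel (fun a _ => a.val = 0)

/-- `S_n^k`: the star `K_{1,n-1}` (center `0`) together with `k` disjoint edges
`(1,2), (3,4), …, (2k-1,2k)` inside its independent set. -/
def Sgraph (n k : ℕ) : SimpleGraph (Fin n) :=
  SimpleGraph.fromRel (fun a b =>
    a.val = 0 ∨ (a.val % 2 = 1 ∧ b.val = a.val + 1 ∧ b.val ≤ 2 * k))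

/-- `C_5 • K_{1,m-5}`: the cycle `0-1-2-3-4-0` with `m-5` pendant vertices
attached to vertex `0`; it has `m` edges. -/
def C5DotStar (m : ℕ) : SimpleGraph (Fin m) :=
  SimpleGraph.fromRel (fun a b =>
    (a.val < 5 ∧ b.val < 5 ∧ b.val = (a.val + 1) % 5) ∨ (a.val = 0 ∧ 5 ≤ b.val))

/-- `S_{n,2}`: `K_2` (vertices 0,1) joined to `n-2` isolated vertices. -/
def Snk2 (n : ℕ) : SimpleGraph (Fin n) :=
  SimpleGraph.fromRel (fun a _ => a.val < 2)

/-- `S_{n,2}^-`: `S_{n,2}` minus one edge (the edge `1-2`) incident to a vertex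
of degree two. -/
def Snk2Minus (n : ℕ) : SimpleGraph (Fin n) :=
  SimpleGraph.fromRel (fun a b => a.val = 0 ∨ (a.val = 1 ∧ b.val ≠ 2))

/-- `C_t^+`: the cycle `C_t` on `0,…,t-1` and a triangle glued along the edge
`0-1`, via the extra vertex `t`. -/
def CtPlus (t : ℕ) : SimpleGraph (Fin (t + 1)) :=
  SimpleGraph.fromRel (fun a b =>
    (a.val < t ∧ b.val < t ∧ b.val = (a.val + 1) % t) ∨ (a.val = t ∧ b.val ≤ 1))

/-- The double star `D_{a,b}`: adjacent centers `0, 1`; `0` has `a` further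
leaves, `1` has `b` further leaves. -/
def doubleStar (a b : ℕ) : SimpleGraph (Fin (a + b + 2)) :=
  SimpleGraph.fromRel (fun x y =>
    (x.val = 0 ∧ (y.val = 1 ∨ (2 ≤ y.val ∧ y.val < a + 2))) ∨
    (x.val = 1 ∧ a + 2 ≤ y.val))

/-- The graph `G₁₄(t,r)`: `u = 0` adjacent to everything, `u₀ = 1` adjacent to
`u_1,…,u_r` (vertices `2,…,r+1`), and `t` further vertices adjacent only to `0`. -/
def G14 (t r : ℕ) : SimpleGraph (Fin (t + r + 2)) :=
  SimpleGraph.fromRel (fun a b => a.val = 0 ∨ (a.val = 1 ∧ 2 ≤ b.val ∧ b.val ≤ r + 1))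

/-- `S_m^e`: the star `K_{1,m-1}` (center 0, leaves `1,…,m-1`) with a pendant
vertex `m` attached to the leaf `1`. -/
def SmE (m : ℕ) : SimpleGraph (Fin (m + 1)) :=
  SimpleGraph.fromRel (fun a b =>
    (a.val = 0 ∧ 1 ≤ b.val ∧ b.val ≤ m - 1) ∨ (a.val = 1 ∧ b.val = m))

/-- `K_{1,m-1} ∪ P_2`: the star with center 0 and leaves `1,…,m-1`, together
with the disjoint edge `m-(m+1)`. -/
def starUnionP2 (m : ℕ) : SimpleGraph (Fin (m + 2)) :=
  SimpleGraph.fromRel (fun a b =>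
    (a.val = 0 ∧ 1 ≤ b.val ∧ b.val ≤ m - 1) ∨ (a.val = m ∧ b.val = m + 1))

/-- `N_0(u)`: neighbors of `u` having no neighbor inside `N(u)`. -/
def N0 {V : Type*} (G : SimpleGraph V) (u : V) : Set V :=
  {v | G.Adj u v ∧ ∀ w, G.Adj v w → ¬ G.Adj u w}

/-- `N_+(u) = N(u) \ N_0(u)`. -/
def Nplus {V : Type*} (G : SimpleGraph V) (u : V) : Set V :=
  G.neighborSet u \ N0 G u

/-- `N_1(u)`: neighbors of `u` having exactly one neighbor inside `N(u)`. -/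
noncomputable def N1set {V : Type*} (G : SimpleGraph V) (u : V) : Set V :=
  {v | G.Adj u v ∧ (G.neighborSet v ∩ G.neighborSet u).ncard = 1}

/-- `W = V(G) \ N[u]`. -/
def Wset {V : Type*} (G : SimpleGraph V) (u : V) : Set V :=
  {v | v ≠ u ∧ ¬ G.Adj u v}

lemma aux_bddAbove {V : Type*} [Fintype V] (G : SimpleGraph V) :
    BddAbove {t : ℝ | ∃ x : V → ℝ, x ≠ 0 ∧ G.adjMatrix ℝ *ᵥ x = t • x} := by
  refine ⟨(Fintype.card V : ℝ), ?_⟩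
  rintro t ⟨x, hx, hAx⟩
  obtain ⟨v₀, hv₀⟩ := Function.ne_iff.mp hx
  obtain ⟨v, -, hv⟩ := Finset.exists_max_image Finset.univ (fun w => |x w|)
    ⟨v₀, Finset.mem_univ _⟩
  have hxv : 0 < |x v| :=
    lt_of_lt_of_le (abs_pos.mpr hv₀) (hv v₀ (Finset.mem_univ _))
  have h1 : t * x v = ∑ w, (if G.Adj v w then (1:ℝ) else 0) * x w := by
    have := congrFun hAx v
    simp [Matrix.mulVec, dotProduct] at this
    simpa [mul_comm] using this.symm
  have h2 : |t| * |x v| ≤ (Fintype.card V : ℝ) * |x v| := by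
    rw [← abs_mul, h1]
    calc |∑ w, (if G.Adj v w then (1:ℝ) else 0) * x w|
        ≤ ∑ w, |(if G.Adj v w then (1:ℝ) else 0) * x w| := Finset.abs_sum_le_sum_abs _ _
      _ ≤ ∑ _w : V, |x v| := by
          refine Finset.sum_le_sum fun w _ => ?_
          rw [abs_mul]
          split_ifs <;> simp [hv w (Finset.mem_univ _), abs_nonneg]
      _ = (Fintype.card V : ℝ) * |x v| := by
          simp [Finset.sum_const, Finset.card_univ, nsmul_eq_mul]
  have ht : |t| ≤ (Fintype.card V : ℝ) := le_of_mul_le_mul_right h2 hxv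
  exact le_trans (le_abs_self t) ht

lemma aux_sum_range_cases (n : ℕ) (hn : 3 ≤ n) (A B C D : ℝ) :
    ∑ i ∈ Finset.range n,
        (if i = 0 then A else if i = 1 then B else if i = 2 then C else D)
      = A + B + C + ((n : ℝ) - 3) * D := by
  rw [← Finset.sum_range_add_sum_Ico _ hn]
  have h1 : ∑ i ∈ Finset.Ico 3 n,
      (if i = 0 then A else if i = 1 then B else if i = 2 then C else D)
      = ((n : ℝ) - 3) * D := by
    rw [Finset.sum_congr rfl (g := fun _ => D) (fun i hi => ?_)]
    · rw [Finset.sum_const, Nat.card_Ico, nsmul_eq_mul]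
      congr 1
      have : (3:ℕ) ≤ n := hn
      push_cast [Nat.cast_sub this]
      ring
    · have h3 := (Finset.mem_Ico.mp hi).1
      split_ifs <;> (first | rfl | omega)
  rw [h1]
  norm_num [Finset.sum_range_succ]

lemma aux_eigen (n : ℕ) (hn : 5 ≤ n) (lam : ℝ) (hpos : 0 < lam)
    (hKlt : (n:ℝ) - 3 < lam^2)
    (hg : lam^4 - (2*((n:ℝ)-3)+2)*lam^2 - 2*((n:ℝ)-3)*lam + ((n:ℝ)-3) = 0) :
    ∃ x : Fin n → ℝ, x ≠ 0 ∧ (Snk2Minus n).adjMatrix ℝ *ᵥ x = lam • x := by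
  set K : ℝ := (n:ℝ) - 3 with hKdef
  set x : Fin n → ℝ := fun w =>
    if w.val = 0 then lam*(lam^2-K) else if w.val = 1 then lam*(lam+K)
    else if w.val = 2 then lam^2-K else lam^2+lam with hxdef
  have hadj : ∀ v w : Fin n, (Snk2Minus n).Adj v w ↔
      (v.val ≠ w.val ∧ (v.val = 0 ∨ (v.val = 1 ∧ w.val ≠ 2) ∨ w.val = 0 ∨
        (w.val = 1 ∧ v.val ≠ 2))) := by
    intro v w
    simp only [Snk2Minus, SimpleGraph.fromRel_adj, ne_eq, Fin.ext_iff]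
    tauto
  refine ⟨x, ?_, ?_⟩
  · intro h
    have h0 := congrFun h ⟨0, by omega⟩
    simp only [hxdef, Pi.zero_apply] at h0
    norm_num at h0
    rcases h0 with h | h
    · exact absurd h (ne_of_gt hpos)
    · linarith
  · funext v
    have key : ∀ A B C D : ℝ,
        (∀ w : Fin n, (if (Snk2Minus n).Adj v w then (1:ℝ) else 0) * x w
          = if w.val = 0 then A else if w.val = 1 then B else if w.val = 2 then C else D) →
        ((Snk2Minus n).adjMatrix ℝ *ᵥ x) v = A + B + C + ((n:ℝ) - 3) * D := by
      intro A B C D hptw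
      have : ((Snk2Minus n).adjMatrix ℝ *ᵥ x) v
          = ∑ w : Fin n, (if (Snk2Minus n).Adj v w then (1:ℝ) else 0) * x w := by
        simp [Matrix.mulVec, dotProduct]
      rw [this, Finset.sum_congr rfl (fun w _ => hptw w),
        Fin.sum_univ_eq_sum_range (fun i => if i = 0 then A else if i = 1 then B else if i = 2 then C else D) n,
        aux_sum_range_cases n (by omega) A B C D]
    have hsmul : (lam • x) v = lam * x v := rfl
    rcases Nat.lt_or_ge v.val 3 with hv | hv
    · interval_cases hvv : v.val
      · rw [key 0 (lam*(lam+K)) (lam^2-K) (lam^2+lam) ?_, hsmul]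
        · have hxv : x v = lam*(lam^2-K) := by simp [hxdef, hvv]
          rw [hxv]
          linear_combination -hg
        · intro w
          simp [hxdef, hadj, hvv]
          split_ifs <;> (first | ring1 | (exfalso; omega))
      · rw [key (lam*(lam^2-K)) 0 0 (lam^2+lam) ?_, hsmul]
        · have hxv : x v = lam*(lam+K) := by simp [hxdef, hvv]
          rw [hxv]
          ring
        · intro w
          simp [hxdef, hadj, hvv]
          split_ifs <;> (first | ring1 | (exfalso; omega))
      · rw [key (lam*(lam^2-K)) 0 0 0 ?_, hsmul]
        · have hxv : x v = lam^2-K := by simp [hxdef, hvv]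
          rw [hxv]
          ring
        · intro w
          simp [hxdef, hadj, hvv]
          split_ifs <;> (first | ring1 | (exfalso; omega))
    · rw [key (lam*(lam^2-K)) (lam*(lam+K)) 0 0 ?_, hsmul]
      · have : x v = lam^2 + lam := by
          simp only [hxdef]
          split_ifs <;> (first | omega | rfl)
        rw [this]
        ring
      · intro w
        simp [hxdef, hadj]
        split_ifs <;> (first | ring1 | (exfalso; omega))


/-- For every even `m ≥ 6`, `ρ(S_{(m+4)/2,2}^-) > (1+√(4m-5))/2`. -/
theorem stmt18 (m : ℕ) (hm : 6 ≤ m) (heven : Even m) :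
    (1 + Real.sqrt (4 * (m : ℝ) - 5)) / 2 < specRad (Snk2Minus ((m + 4) / 2)) := by
  obtain ⟨j, hj⟩ := heven
  set n : ℕ := (m + 4) / 2 with hndef
  have hn5 : 5 ≤ n := by omega
  have hK2 : (2:ℝ) ≤ (n:ℝ) - 3 := by
    have : (5:ℝ) ≤ (n:ℝ) := by exact_mod_cast hn5
    linarith
  have hmK : (m:ℝ) = 2*((n:ℝ)-3) + 2 := by
    have h : m + 4 = 2 * n := by omega
    have h2 := congrArg (Nat.cast : ℕ → ℝ) h
    push_cast at h2
    linarith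
  set s := Real.sqrt (4*(m:ℝ) - 5) with hsdef
  have hs0 : 0 ≤ s := Real.sqrt_nonneg _
  have hs2 : s^2 = 4*(m:ℝ) - 5 := Real.sq_sqrt (by
    have : (6:ℝ) ≤ (m:ℝ) := by exact_mod_cast hm
    linarith)
  set a := (1 + s)/2 with hadef
  have ha2 : a^2 = a + 2*((n:ℝ)-3) + 1/2 := by
    rw [hadef]
    linear_combination hs2/4 + hmK
  have hga : a^4 - (2*((n:ℝ)-3)+2)*a^2 - 2*((n:ℝ)-3)*a + ((n:ℝ)-3) = -(1/4) := by
    linear_combination (a^2 + a - 1/2) * ha2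
  have hgb : 0 < (((n:ℝ)-3)+2)^4 - (2*((n:ℝ)-3)+2)*(((n:ℝ)-3)+2)^2
      - 2*((n:ℝ)-3)*(((n:ℝ)-3)+2) + ((n:ℝ)-3) := by
    have hKpos : (0:ℝ) < (n:ℝ) - 3 := by linarith
    have hexp : (((n:ℝ)-3)+2)^4 - (2*((n:ℝ)-3)+2)*(((n:ℝ)-3)+2)^2
        - 2*((n:ℝ)-3)*(((n:ℝ)-3)+2) + ((n:ℝ)-3)
        = ((n:ℝ)-3)^4 + 6*((n:ℝ)-3)^3 + 12*((n:ℝ)-3)^2 + 13*((n:ℝ)-3) + 8 := by ring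
    rw [hexp]
    have h4 := pow_pos hKpos 4
    have h3 := pow_pos hKpos 3
    have h2 := sq_nonneg ((n:ℝ)-3)
    nlinarith [h4, h3, h2, hKpos]
  have hab : a ≤ ((n:ℝ)-3) + 2 := by
    have h2 : 4*(m:ℝ) - 5 ≤ (2*((n:ℝ)-3)+3)^2 := by nlinarith [hK2]
    have h1 : s ≤ 2*((n:ℝ)-3) + 3 := by
      rw [hsdef]
      calc Real.sqrt (4*(m:ℝ)-5) ≤ Real.sqrt ((2*((n:ℝ)-3)+3)^2) := Real.sqrt_le_sqrt h2
        _ = 2*((n:ℝ)-3)+3 := Real.sqrt_sq (by linarith)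
    rw [hadef]; linarith
  have hcont : ContinuousOn
      (fun y : ℝ => y^4 - (2*((n:ℝ)-3)+2)*y^2 - 2*((n:ℝ)-3)*y + ((n:ℝ)-3))
      (Set.Icc a (((n:ℝ)-3)+2)) := by fun_prop
  have h0mem : (0:ℝ) ∈ Set.Ioo
      ((fun y : ℝ => y^4 - (2*((n:ℝ)-3)+2)*y^2 - 2*((n:ℝ)-3)*y + ((n:ℝ)-3)) a)
      ((fun y : ℝ => y^4 - (2*((n:ℝ)-3)+2)*y^2 - 2*((n:ℝ)-3)*y + ((n:ℝ)-3)) (((n:ℝ)-3)+2)) := by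
    constructor
    · exact lt_of_le_of_lt (le_of_eq hga) (by norm_num)
    · exact hgb
  obtain ⟨lam, hlmem, hlval⟩ := intermediate_value_Ioo hab hcont h0mem
  have halam : a < lam := hlmem.1
  have ha_pos : 0 < a := by rw [hadef]; linarith
  have hlam_pos : 0 < lam := lt_trans ha_pos halam
  have hKlt : (n:ℝ) - 3 < lam^2 := by
    nlinarith [ha2, hK2, mul_pos (sub_pos.2 halam) (show (0:ℝ) < lam + a by linarith)]
  obtain ⟨x, hxne, hxeq⟩ := aux_eigen n hn5 lam hlam_pos hKlt hlval
  have hmem : lam ∈ {t : ℝ | ∃ x : Fin n → ℝ,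
      x ≠ 0 ∧ (Snk2Minus n).adjMatrix ℝ *ᵥ x = t • x} := ⟨x, hxne, hxeq⟩
  have hle : lam ≤ specRad (Snk2Minus n) := by
    unfold specRad
    exact le_csSup (aux_bddAbove _) hmem
  calc (1 + Real.sqrt (4*(m:ℝ)-5))/2 = a := by rw [hadef]
    _ < lam := halam
    _ ≤ _ := hle
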